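/- arXiv:2308.10715 — 2 statements merged into one kernel-verified Lean document; each statement's English description precedes it below -/
import Mathlib

section
/- Let (Ω, F, P) be a probability space and X ∈ L²(P). Then E[φ(X)] = sup over bounded measurable λ : Ω → ℝ of E[λX − φ*(λ)], and the supremum is achieved exactly when λ = φ'(X) = tanh(X + h) almost surely. -/
/-!
Pointwise, the Fenchel–Young gap `φ(x) - (λx - φ*(λ))` of `φ = log cosh (· + h)` is the binary
Kullback–Leibler divergence of the two-point distribution `((1 + λ)/2, (1 - λ)/2)` from
`((1 + t)/2, (1 - t)/2)`, where `t = tanh (x + h)`. It is therefore nonnegative for `|λ| ≤ 1`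
and vanishes exactly when `λ = t`. Integrating gives `E[λX - φ*(λ)] ≤ E[φ(X)]`, with equality
iff the nonnegative gap vanishes almost surely, i.e. iff `λ = tanh (X + h)` a.s.; this `λ` is
bounded and (after modifying `X` on a null set) measurable, so it attains the supremum.
-/

open MeasureTheory

noncomputable def phi (h x : ℝ) : ℝ := Real.log (Real.cosh (x + h))

/-- The real-valued formula for the convex dual `φ*` of `φ`, valid on `[-1,1]`
(outside of `[-1,1]`, the true convex dual is `+∞`). -/
noncomputable def phiStarFormula (h lam : ℝ) : ℝ :=
  1 / 2 * ((1 + lam) * Real.log (1 + lam) + (1 - lam) * Real.log (1 - lam)) - lam * h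

open Classical in
/-- The value `E[λ X - φ*(λ)]`, interpreted as `-∞` when `E[φ*(λ)] = +∞`, i.e. when
`λ` does not take values in `[-1,1]` almost surely. -/
noncomputable def dualValue {Ω : Type*} [MeasurableSpace Ω] (μ : Measure Ω) (h : ℝ)
    (X l : Ω → ℝ) : EReal :=
  if ∀ᵐ ω ∂μ, |l ω| ≤ 1
    then ((∫ ω, (l ω * X ω - phiStarFormula h (l ω)) ∂μ : ℝ) : EReal)
    else ⊥

open Real InformationTheory

namespace Real

lemma continuous_tanh : Continuous tanh := by
  simp only [funext tanh_eq_sinh_div_cosh]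
  exact continuous_sinh.div continuous_cosh fun x => (cosh_pos x).ne'

lemma log_one_add_tanh (y : ℝ) : log (1 + tanh y) = y - log (cosh y) := by
  have hcosh : 1 + tanh y = exp y / cosh y := by
    rw [tanh_eq_sinh_div_cosh, ← cosh_add_sinh]
    field_simp [(cosh_pos y).ne']
  rw [hcosh, log_div (exp_ne_zero y) (cosh_pos y).ne', log_exp]

lemma log_one_sub_tanh (y : ℝ) : log (1 - tanh y) = -y - log (cosh y) := by
  have hcosh : 1 - tanh y = exp (-y) / cosh y := by
    rw [tanh_eq_sinh_div_cosh, ← cosh_sub_sinh]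
    field_simp [(cosh_pos y).ne']
  rw [hcosh, log_div (exp_ne_zero (-y)) (cosh_pos y).ne', log_exp]

lemma log_cosh_le_abs (y : ℝ) : log (cosh y) ≤ |y| := by
  have hexp : cosh y ≤ exp |y| := by
    rw [cosh_eq]
    linarith [exp_le_exp.mpr (le_abs_self y), exp_le_exp.mpr (neg_le_abs y)]
  simpa using log_le_log (cosh_pos y) hexp

end Real

lemma mul_klFun_div {u v : ℝ} (hv : 0 < v) :
    v * klFun (u / v) = u * (log u - log v) + v - u := by
  rcases eq_or_ne u 0 with rfl | hu
  · simp [klFun]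
  · rw [klFun, log_div hu hv.ne']
    field_simp

lemma mul_klFun_div_nonneg {u v : ℝ} (hu : 0 ≤ u) (hv : 0 < v) : 0 ≤ v * klFun (u / v) :=
  mul_nonneg hv.le (klFun_nonneg (div_nonneg hu hv.le))

lemma mul_klFun_div_eq_zero_iff {u v : ℝ} (hu : 0 ≤ u) (hv : 0 < v) :
    v * klFun (u / v) = 0 ↔ u = v := by
  rw [mul_eq_zero, klFun_eq_zero_iff (div_nonneg hu hv.le), div_eq_one_iff_eq hv.ne',
    or_iff_right hv.ne']

lemma phi_sub_fenchel_eq (h x lam : ℝ) :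
    phi h x - (lam * x - phiStarFormula h lam) =
      ((1 + tanh (x + h)) * klFun ((1 + lam) / (1 + tanh (x + h))) +
        (1 - tanh (x + h)) * klFun ((1 - lam) / (1 - tanh (x + h)))) / 2 := by
  rw [mul_klFun_div (by linarith [neg_one_lt_tanh (x + h)]),
    mul_klFun_div (by linarith [tanh_lt_one (x + h)]), log_one_add_tanh, log_one_sub_tanh]
  unfold phi phiStarFormula
  ring

section FenchelYoung

variable {h x lam : ℝ}

lemma fenchel_young_phi (hlam : |lam| ≤ 1) : lam * x - phiStarFormula h lam ≤ phi h x := by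
  obtain ⟨hlam₁, hlam₂⟩ := abs_le.mp hlam
  have ht₁ := neg_one_lt_tanh (x + h)
  have ht₂ := tanh_lt_one (x + h)
  rw [← sub_nonneg, phi_sub_fenchel_eq]
  exact div_nonneg (add_nonneg (mul_klFun_div_nonneg (by linarith) (by linarith))
    (mul_klFun_div_nonneg (by linarith) (by linarith))) zero_le_two

lemma fenchel_young_phi_eq_iff (hlam : |lam| ≤ 1) :
    lam * x - phiStarFormula h lam = phi h x ↔ lam = tanh (x + h) := by
  obtain ⟨hlam₁, hlam₂⟩ := abs_le.mp hlam
  have ht₁ : 0 < 1 + tanh (x + h) := by linarith [neg_one_lt_tanh (x + h)]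
  have ht₂ : 0 < 1 - tanh (x + h) := by linarith [tanh_lt_one (x + h)]
  have hu₁ : 0 ≤ 1 + lam := by linarith
  have hu₂ : 0 ≤ 1 - lam := by linarith
  rw [eq_comm, ← sub_eq_zero, phi_sub_fenchel_eq, div_eq_zero_iff, or_iff_left two_ne_zero,
    add_eq_zero_iff_of_nonneg (mul_klFun_div_nonneg hu₁ ht₁) (mul_klFun_div_nonneg hu₂ ht₂),
    mul_klFun_div_eq_zero_iff hu₁ ht₁, mul_klFun_div_eq_zero_iff hu₂ ht₂]
  constructor
  · rintro ⟨heq, -⟩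
    linarith
  · intro heq
    constructor <;> linarith

end FenchelYoung

section Integrals

variable {Ω : Type*} [MeasurableSpace Ω] {μ : Measure Ω} [IsFiniteMeasure μ] {X l : Ω → ℝ}

lemma MeasureTheory.Integrable.phi_comp (h : ℝ) (hX : Integrable X μ) :
    Integrable (fun ω => phi h (X ω)) μ := by
  have hphi : Measurable (phi h) := by unfold phi; fun_prop
  refine (hX.abs.add (integrable_const |h|)).mono' 
    (hphi.comp_aemeasurable hX.aemeasurable).aestronglyMeasurable (ae_of_all _ fun ω => ?_)
  rw [norm_eq_abs, phi, abs_of_nonneg (log_nonneg (one_le_cosh _))]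
  exact (log_cosh_le_abs _).trans (abs_add_le _ _)

lemma integrable_fenchel_integrand (h : ℝ) (hX : Integrable X μ)
    (hl : AEStronglyMeasurable l μ) (hl₁ : ∀ᵐ ω ∂μ, |l ω| ≤ 1) :
    Integrable (fun ω => l ω * X ω - phiStarFormula h (l ω)) μ := by
  have hcont : Continuous (phiStarFormula h) := by
    unfold phiStarFormula
    have := continuous_mul_log.comp (continuous_const_add (1 : ℝ))
    have := continuous_mul_log.comp (continuous_sub_left (1 : ℝ))
    fun_prop
  obtain ⟨M, hM⟩ := (isCompact_Icc (a := -1) (b := 1)).exists_bound_of_continuousOn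
    hcont.continuousOn
  refine (hX.bdd_mul hl hl₁).sub ((integrable_const M).mono'
    (hcont.comp_aestronglyMeasurable hl) ?_)
  filter_upwards [hl₁] with ω hω using hM _ (Set.mem_Icc.mpr (abs_le.mp hω))

lemma dualValue_le_integral_phi (h : ℝ) (hX : Integrable X μ) (hl : AEStronglyMeasurable l μ) :
    dualValue μ h X l ≤ ((∫ ω, phi h (X ω) ∂μ : ℝ) : EReal) := by
  unfold dualValue
  split_ifs with hl₁
  · exact EReal.coe_le_coe_iff.mpr <| integral_mono_ae
      (integrable_fenchel_integrand h hX hl hl₁) (hX.phi_comp h)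
      (by filter_upwards [hl₁] with ω hω using fenchel_young_phi hω)
  · exact bot_le

lemma dualValue_eq_integral_phi_iff (h : ℝ) (hX : Integrable X μ)
    (hl : AEStronglyMeasurable l μ) :
    dualValue μ h X l = ((∫ ω, phi h (X ω) ∂μ : ℝ) : EReal) ↔
      l =ᵐ[μ] fun ω => tanh (X ω + h) := by
  constructor
  · intro heq
    unfold dualValue at heq
    split_ifs at heq with hl₁
    · have hint := integrable_fenchel_integrand h hX hl hl₁
      have hgap :
          0 ≤ᵐ[μ] fun ω => phi h (X ω) - (l ω * X ω - phiStarFormula h (l ω)) := by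
        filter_upwards [hl₁] with ω hω using sub_nonneg.mpr (fenchel_young_phi hω)
      have hzero := (integral_eq_zero_iff_of_nonneg_ae hgap ((hX.phi_comp h).sub hint)).mp
        (by rw [integral_sub (hX.phi_comp h) hint, ← EReal.coe_eq_coe_iff.mp heq, sub_self])
      filter_upwards [hl₁, hzero] with ω hω hω₀
      exact (fenchel_young_phi_eq_iff hω).mp (sub_eq_zero.mp hω₀).symm
    · exact absurd heq.symm (EReal.coe_ne_bot _)
  · intro hl_eq
    have hl₁ : ∀ᵐ ω ∂μ, |l ω| ≤ 1 := by
      filter_upwards [hl_eq] with ω hω using hω ▸ (abs_tanh_lt_one _).le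
    rw [dualValue, if_pos hl₁, EReal.coe_eq_coe_iff]
    refine integral_congr_ae ?_
    filter_upwards [hl_eq] with ω hω
    exact (fenchel_young_phi_eq_iff (hω ▸ (abs_tanh_lt_one _).le)).mpr hω

end Integrals

theorem stmt6 {Ω : Type*} [MeasurableSpace Ω] (μ : Measure Ω) [IsProbabilityMeasure μ]
    (h : ℝ) (X : Ω → ℝ) (hX : MemLp X 2 μ) :
    (⨆ l : {l : Ω → ℝ // Measurable l ∧ ∃ C : ℝ, ∀ ω, |l ω| ≤ C},
        dualValue μ h X l.1) = ((∫ ω, phi h (X ω) ∂μ : ℝ) : EReal) ∧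
    ∀ l : Ω → ℝ, Measurable l → (∃ C : ℝ, ∀ ω, |l ω| ≤ C) →
      (dualValue μ h X l = ((∫ ω, phi h (X ω) ∂μ : ℝ) : EReal)
        ↔ l =ᵐ[μ] fun ω => Real.tanh (X ω + h)) := by
  have hXi : Integrable X μ := hX.integrable one_le_two
  refine ⟨le_antisymm (iSup_le fun l => ?_) ?_, fun l hl _ => ?_⟩
  · exact dualValue_le_integral_phi h hXi l.2.1.aestronglyMeasurable
  · set X' := hX.aestronglyMeasurable.mk X
    have hl₀ : Measurable fun ω => tanh (X' ω + h) :=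
      continuous_tanh.measurable.comp
        (hX.aestronglyMeasurable.stronglyMeasurable_mk.measurable.add_const h)
    have hl₀_eq : (fun ω => tanh (X' ω + h)) =ᵐ[μ] fun ω => tanh (X ω + h) := by
      filter_upwards [hX.aestronglyMeasurable.ae_eq_mk] with ω hω
      rw [hω]
    calc ((∫ ω, phi h (X ω) ∂μ : ℝ) : EReal)
        = dualValue μ h X fun ω => tanh (X' ω + h) :=
          ((dualValue_eq_integral_phi_iff h hXi hl₀.aestronglyMeasurable).mpr hl₀_eq).symm
      _ ≤ _ := le_iSup_of_le ⟨_, hl₀, 1, fun _ => (abs_tanh_lt_one _).le⟩ le_rfl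
  · exact dualValue_eq_integral_phi_iff h hXi hl.aestronglyMeasurable
end

section
/- Let K be a nonempty compact convex subset of a topological vector space, M a nonempty convex subset of a vector space, and G : M × K → ℝ a function that is affine in each variable separately and such that G(μ, ·) is continuous on K for each μ ∈ M. Then inf_{μ ∈ M} sup_{k ∈ K} G(μ, k) = sup_{k ∈ K} inf_{μ ∈ M} G(μ, k). -/
lemma affine_on_sum {M : Type*} [AddCommGroup M] [Module ℝ M]
    {S : Set M} (hS : Convex ℝ S) (g : M → ℝ)
    (hg : ∀ μ₁ ∈ S, ∀ μ₂ ∈ S, ∀ a b : ℝ, 0 ≤ a → 0 ≤ b → a + b = 1 →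
      g (a • μ₁ + b • μ₂) = a * g μ₁ + b * g μ₂)
    {ι : Type*} (T : Finset ι) :
    ∀ (w : ι → ℝ) (p : ι → M), (∀ i ∈ T, 0 ≤ w i) → (∑ i ∈ T, w i) = 1 →
      (∀ i ∈ T, p i ∈ S) →
      g (∑ i ∈ T, w i • p i) = ∑ i ∈ T, w i * g (p i) := by
  classical
  induction T using Finset.induction_on with
  | empty => intro w p _ h1 _; simp at h1
  | @insert a s ha ih =>
    intro w p h0 h1 hp
    have hwa : 0 ≤ w a := h0 a (Finset.mem_insert_self a s)
    set b : ℝ := ∑ i ∈ s, w i with hb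
    have hbnn : 0 ≤ b := Finset.sum_nonneg fun i hi => h0 i (Finset.mem_insert_of_mem hi)
    have hsum : w a + b = 1 := by rw [hb, ← Finset.sum_insert ha]; exact h1
    rcases eq_or_lt_of_le hbnn with hb0 | hbpos
    · have hz : ∀ i ∈ s, w i = 0 := by
        intro i hi
        have := (Finset.sum_eq_zero_iff_of_nonneg
          (fun j hj => h0 j (Finset.mem_insert_of_mem hj))).1 hb0.symm
        exact this i hi
      have hwa1 : w a = 1 := by rw [← hsum, ← hb0]; ring
      rw [Finset.sum_insert ha, Finset.sum_insert ha, hwa1,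
        Finset.sum_eq_zero (fun i hi => by rw [hz i hi, zero_smul]),
        Finset.sum_eq_zero (fun i hi => by rw [hz i hi, zero_mul])]
      simp
    · have hbne : b ≠ 0 := ne_of_gt hbpos
      set q : M := ∑ i ∈ s, (w i / b) • p i with hq
      have hw' : ∀ i ∈ s, 0 ≤ w i / b := fun i hi =>
        div_nonneg (h0 i (Finset.mem_insert_of_mem hi)) hbnn
      have hsum' : (∑ i ∈ s, w i / b) = 1 := by
        rw [← Finset.sum_div, ← hb, div_self hbne]
      have hqS : q ∈ S := hS.sum_mem hw' hsum' (fun i hi => hp i (Finset.mem_insert_of_mem hi))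
      have hgq : g q = ∑ i ∈ s, (w i / b) * g (p i) :=
        ih _ _ hw' hsum' (fun i hi => hp i (Finset.mem_insert_of_mem hi))
      have hbq : b • q = ∑ i ∈ s, w i • p i := by
        rw [hq, Finset.smul_sum]
        refine Finset.sum_congr rfl fun i hi => ?_
        rw [smul_smul, mul_div_cancel₀ _ hbne]
      rw [Finset.sum_insert ha, Finset.sum_insert ha, ← hbq,
        hg (p a) (hp a (Finset.mem_insert_self a s)) q hqS (w a) b hwa hbnn hsum,
        hgq, Finset.mul_sum]
      congr 1
      refine Finset.sum_congr rfl fun i hi => ?_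
      rw [← mul_assoc, mul_div_cancel₀ _ hbne]

theorem stmt12 {E M : Type*} [AddCommGroup E] [Module ℝ E] [TopologicalSpace E]
    [AddCommGroup M] [Module ℝ M]
    (K : Set E) (hK_ne : K.Nonempty) (hK_cpt : IsCompact K) (hK_cvx : Convex ℝ K)
    (S : Set M) (hS_ne : S.Nonempty) (hS_cvx : Convex ℝ S)
    (G : M → E → ℝ)
    (haffM : ∀ k ∈ K, ∀ μ₁ ∈ S, ∀ μ₂ ∈ S, ∀ a b : ℝ, 0 ≤ a → 0 ≤ b → a + b = 1 →
      G (a • μ₁ + b • μ₂) k = a * G μ₁ k + b * G μ₂ k)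
    (haffK : ∀ μ ∈ S, ∀ k₁ ∈ K, ∀ k₂ ∈ K, ∀ a b : ℝ, 0 ≤ a → 0 ≤ b → a + b = 1 →
      G μ (a • k₁ + b • k₂) = a * G μ k₁ + b * G μ k₂)
    (hcont : ∀ μ ∈ S, ContinuousOn (G μ) K) :
    (⨅ μ ∈ S, ⨆ k ∈ K, (G μ k : EReal)) = ⨆ k ∈ K, ⨅ μ ∈ S, (G μ k : EReal) := by
  classical
  refine le_antisymm ?_ ?_
  swap
  · -- easy direction
    refine le_iInf₂ fun μ hμ => iSup₂_le fun k hk => ?_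
    exact le_trans (iInf₂_le μ hμ) (le_iSup₂ (f := fun k (_ : k ∈ K) => (G μ k : EReal)) k hk)
  by_contra hlt
  push_neg at hlt
  obtain ⟨q, hq1, hq2⟩ := EReal.exists_rat_btwn_of_lt hlt
  set c : ℝ := (q : ℝ) with hc
  -- from hq2 : q < inf sup, for every μ ∈ S there is k ∈ K with c < G μ k
  have hA : ∀ μ ∈ S, ∃ k ∈ K, c < G μ k := by
    intro μ hμ
    have h1 : ((c : ℝ) : EReal) < ⨆ k ∈ K, (G μ k : EReal) :=
      lt_of_lt_of_le hq2 (iInf₂_le μ hμ)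
    rw [lt_iSup_iff] at h1
    obtain ⟨k, hk⟩ := h1
    rw [lt_iSup_iff] at hk
    obtain ⟨hkK, hk⟩ := hk
    exact ⟨k, hkK, EReal.coe_lt_coe_iff.1 hk⟩
  -- from hq1 : sup inf < q, for every k ∈ K there is μ ∈ S with G μ k < c
  have hB : ∀ k ∈ K, ∃ μ ∈ S, G μ k < c := by
    intro k hk
    have h1 : (⨅ μ ∈ S, (G μ k : EReal)) < ((c : ℝ) : EReal) :=
      lt_of_le_of_lt (le_iSup₂ (f := fun k (_ : k ∈ K) => ⨅ μ ∈ S, (G μ k : EReal)) k hk) hq1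
    rw [iInf_lt_iff] at h1
    obtain ⟨μ, hμ⟩ := h1
    rw [iInf_lt_iff] at hμ
    obtain ⟨hμS, hμ⟩ := hμ
    exact ⟨μ, hμS, EReal.coe_lt_coe_iff.1 hμ⟩
  -- compactness: finite subcover
  haveI : CompactSpace K := isCompact_iff_compactSpace.1 hK_cpt
  set U : S → Set K := fun i => {k : K | G i.1 k.1 < c} with hU
  have hUopen : ∀ i : S, IsOpen (U i) := by
    intro i
    have : Continuous fun k : K => G i.1 k.1 :=
      continuousOn_iff_continuous_restrict.1 (hcont i.1 i.2)
    exact isOpen_Iio.preimage this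
  have hUcover : (Set.univ : Set K) ⊆ ⋃ i, U i := by
    intro k _
    obtain ⟨μ, hμS, hμ⟩ := hB k.1 k.2
    exact Set.mem_iUnion.2 ⟨⟨μ, hμS⟩, hμ⟩
  obtain ⟨T, hT⟩ := isCompact_univ.elim_finite_subcover U hUopen hUcover
  -- finite-dimensional separation
  set Φ : E → ({x // x ∈ T} → ℝ) := fun k i => G i.1.1 k with hΦ
  set C : Set ({x // x ∈ T} → ℝ) := Φ '' K with hC
  have hCcpt : IsCompact C := by
    apply hK_cpt.image_of_continuousOn
    rw [continuousOn_pi]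
    intro i
    exact hcont i.1.1 i.1.2
  have hCcvx : Convex ℝ C := by
    rintro y₁ ⟨k₁, hk₁, rfl⟩ y₂ ⟨k₂, hk₂, rfl⟩ a b haa hbb hab
    refine ⟨a • k₁ + b • k₂, hK_cvx hk₁ hk₂ haa hbb hab, ?_⟩
    funext i
    simp only [Pi.add_apply, Pi.smul_apply, smul_eq_mul, hΦ]
    exact (haffK i.1.1 i.1.2 k₁ hk₁ k₂ hk₂ a b haa hbb hab)
  set D : Set ({x // x ∈ T} → ℝ) := {z | ∀ i, c ≤ z i} with hD
  have hDcl : IsClosed D := by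
    rw [hD, Set.setOf_forall]
    exact isClosed_iInter fun i => isClosed_le continuous_const (continuous_apply i)
  have hDcvx : Convex ℝ D := by
    rintro z₁ hz₁ z₂ hz₂ a b haa hbb hab i
    have : a * c + b * c ≤ a * z₁ i + b * z₂ i :=
      add_le_add (mul_le_mul_of_nonneg_left (hz₁ i) haa)
        (mul_le_mul_of_nonneg_left (hz₂ i) hbb)
    calc c = a * c + b * c := by rw [← add_mul, hab, one_mul]
    _ ≤ a * z₁ i + b * z₂ i := this
    _ = (a • z₁ + b • z₂) i := by simp [smul_eq_mul]
  have hdisj : Disjoint C D := by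
    rw [Set.disjoint_left]
    rintro y ⟨k, hkK, rfl⟩ hyD
    have hmem := hT (Set.mem_univ (⟨k, hkK⟩ : K))
    rw [Set.mem_iUnion₂] at hmem
    obtain ⟨i, hiT, hi⟩ := hmem
    exact absurd (hyD ⟨i, hiT⟩) (not_le.2 hi)
  obtain ⟨f, u, v, hfu, huv, hfv⟩ :=
    geometric_hahn_banach_compact_closed hCcvx hCcpt hDcvx hDcl hdisj
  -- extract coefficients
  set lam : {x // x ∈ T} → ℝ := fun i => f (fun j => if i = j then 1 else 0) with hlam
  have hfx : ∀ x : {x // x ∈ T} → ℝ, f x = ∑ i, x i * lam i := by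
    intro x
    have := (f : ({x // x ∈ T} → ℝ) →ₗ[ℝ] ℝ).pi_apply_eq_sum_univ x
    simpa [smul_eq_mul] using this
  have hconst : ∀ r : ℝ, f (fun _ => r) = r * ∑ i, lam i := by
    intro r
    rw [hfx, Finset.mul_sum]
  have hDconst : (fun _ : {x // x ∈ T} => c) ∈ D := fun i => le_refl c
  have hlam_nn : ∀ i, 0 ≤ lam i := by
    intro i
    by_contra hneg
    push_neg at hneg
    have h0 : v < c * ∑ j, lam j := by
      have := hfv _ hDconst; rwa [hconst] at this
    set r : ℝ := (v - c * ∑ j, lam j) / lam i with hr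
    have hrpos : 0 < r := div_pos_of_neg_of_neg (by linarith) hneg
    have hzD : (fun j => c + if i = j then r else 0) ∈ D := by
      intro j
      by_cases h : i = j <;> simp [h] <;> linarith
    have hval : f (fun j => c + if i = j then r else 0) = c * (∑ j, lam j) + r * lam i := by
      rw [hfx]
      have heach : ∀ j, (c + if i = j then r else 0) * lam j
          = c * lam j + (if i = j then r * lam j else 0) := by
        intro j; by_cases h : i = j <;> simp [h] <;> ring
      simp_rw [heach]
      rw [Finset.sum_add_distrib, ← Finset.mul_sum, Finset.sum_ite_eq]
      simp
    have := hfv _ hzD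
    rw [hval, hr, div_mul_cancel₀ _ (ne_of_lt hneg)] at this
    linarith
  have hsum_nn : 0 ≤ ∑ i, lam i := Finset.sum_nonneg fun i _ => hlam_nn i
  obtain ⟨k₀, hk₀⟩ := hK_ne
  have hy₀ : Φ k₀ ∈ C := ⟨k₀, hk₀, rfl⟩
  have hsum_pos : 0 < ∑ i, lam i := by
    rcases eq_or_lt_of_le hsum_nn with h0 | h; swap; · exact h
    exfalso
    have hz : ∀ i, lam i = 0 := by
      intro i
      have := (Finset.sum_eq_zero_iff_of_nonneg (fun j _ => hlam_nn j)).1 h0.symm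
      exact this i (Finset.mem_univ i)
    have h1 : f (Φ k₀) = 0 := by rw [hfx]; simp [hz]
    have h2 : f (fun _ => c) = 0 := by rw [hconst, ← h0]; ring
    have := hfu _ hy₀
    have := hfv _ hDconst
    linarith
  set L : ℝ := ∑ i, lam i with hL
  -- the convex combination
  set w : {x // x ∈ T} → ℝ := fun i => lam i / L with hw
  set μst : M := ∑ i, w i • (i.1.1 : M) with hμst
  have hw_nn : ∀ i ∈ Finset.univ, 0 ≤ w i := fun i _ => div_nonneg (hlam_nn i) hsum_nn
  have hw_sum : ∑ i, w i = 1 := by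
    rw [hw]; simp only []; rw [← Finset.sum_div, ← hL, div_self (ne_of_gt hsum_pos)]
  have hμstS : μst ∈ S :=
    hS_cvx.sum_mem hw_nn hw_sum (fun i _ => i.1.2)
  -- key bound: ∀ k ∈ K, G μst k < c
  have hkey : ∀ k ∈ K, G μst k < c := by
    intro k hk
    have haff : G μst k = ∑ i, w i * G i.1.1 k := by
      have := affine_on_sum hS_cvx (fun μ => G μ k)
        (fun μ₁ h₁ μ₂ h₂ a b ha hb hab => haffM k hk μ₁ h₁ μ₂ h₂ a b ha hb hab)
        Finset.univ w (fun i => (i.1.1 : M)) hw_nn hw_sum (fun i _ => i.1.2)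
      exact this
    have hfk : f (Φ k) = ∑ i, G i.1.1 k * lam i := by
      rw [hfx]
    have h1 : f (Φ k) < c * L := by
      have h2 := hfu _ ⟨k, hk, rfl⟩
      have h3 := hfv _ hDconst
      rw [hconst] at h3
      calc f (Φ k) < u := h2
      _ < v := huv
      _ < c * L := h3
    rw [haff]
    have : ∑ i, w i * G i.1.1 k = (∑ i, G i.1.1 k * lam i) / L := by
      rw [Finset.sum_div]
      refine Finset.sum_congr rfl fun i _ => ?_
      rw [hw]; ring
    rw [this, ← hfk, div_lt_iff₀ hsum_pos]
    linarith [mul_comm c L ▸ h1]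
  obtain ⟨k, hkK, hck⟩ := hA μst hμstS
  exact absurd (hkey k hkK) (not_lt.2 (le_of_lt hck))
end
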